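/- In the 1D SIPDG setting, for two adjacent elements T, T' sharing the node x_T^r (T' to the right of T), the off-diagonal bilinear form value is A_k(ψ_T^σ, ψ_{T'}^{σ'}) = (−1)^{σ'+1}[α₀k²/h − σ(σ+1)/(2h) − σ'(σ'+1)/(2h)], and in particular |A_k(ψ_T^σ, ψ_{T'}^{σ'})| = (1/(2h))|2α₀k² − σ(σ+1) − σ'(σ'+1)|. -/

import Mathlib

open Polynomial

/-- The Legendre polynomials on `[-1,1]`, normalized by `l_σ(1) = 1`, defined by the
three-term recurrence `(n+2) l_{n+2} = (2(n+1)+1) X l_{n+1} - (n+1) l_n`. -/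
noncomputable def legendre : ℕ → Polynomial ℝ
  | 0 => 1
  | 1 => X
  | (n+2) =>
      C ((2*(n+1 : ℝ)+1)/(n+2 : ℝ)) * (X * legendre (n+1))
        - C ((n+1 : ℝ)/(n+2 : ℝ)) * legendre n

lemma legendre_eval_one : ∀ n : ℕ, (legendre n).eval 1 = 1
  | 0 => by simp [legendre]
  | 1 => by simp [legendre]
  | (n+2) => by
      have h1 := legendre_eval_one (n+1)
      have h2 := legendre_eval_one n
      have hn : (n:ℝ)+2 ≠ 0 := by positivity
      simp only [legendre, eval_sub, eval_mul, eval_C, eval_X, h1, h2]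
      field_simp
      ring

lemma legendre_eval_neg_one : ∀ n : ℕ, (legendre n).eval (-1) = (-1)^n
  | 0 => by simp [legendre]
  | 1 => by simp [legendre]
  | (n+2) => by
      have h1 := legendre_eval_neg_one (n+1)
      have h2 := legendre_eval_neg_one n
      have hn : (n:ℝ)+2 ≠ 0 := by positivity
      simp only [legendre, eval_sub, eval_mul, eval_C, eval_X, h1, h2, pow_succ]
      field_simp
      ring

lemma legendre_deriv_one : ∀ n : ℕ, (legendre n).derivative.eval 1 = n*(n+1)/2
  | 0 => by simp [legendre]
  | 1 => by simp [legendre]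
  | (n+2) => by
      have h1 := legendre_deriv_one (n+1)
      have h2 := legendre_deriv_one n
      have e1 := legendre_eval_one (n+1)
      have hn : (n:ℝ)+2 ≠ 0 := by positivity
      simp only [legendre, derivative_sub, derivative_C_mul, derivative_mul,
        derivative_X, eval_sub, eval_mul, eval_add, eval_C, eval_X, one_mul,
        h1, h2, e1, derivative_C, eval_zero, zero_mul, zero_add]
      push_cast
      field_simp
      ring

lemma legendre_deriv_neg_one :
    ∀ n : ℕ, (legendre n).derivative.eval (-1) = (-1)^(n+1) * (n*(n+1)/2)
  | 0 => by simp [legendre]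
  | 1 => by simp [legendre]
  | (n+2) => by
      have h1 := legendre_deriv_neg_one (n+1)
      have h2 := legendre_deriv_neg_one n
      have e1 := legendre_eval_neg_one (n+1)
      have hn : (n:ℝ)+2 ≠ 0 := by positivity
      simp only [legendre, derivative_sub, derivative_C_mul, derivative_mul,
        derivative_X, eval_sub, eval_mul, eval_add, eval_C, eval_X, one_mul,
        h1, h2, e1, pow_succ, derivative_C, eval_zero, zero_mul, zero_add]
      push_cast
      field_simp
      ring

lemma deriv_comp_affine (p : Polynomial ℝ) (c d x : ℝ) :
    deriv (fun y => p.eval (c*y + d)) x = c * p.derivative.eval (c*x+d) := by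
  have h1 : HasDerivAt (fun y : ℝ => c*y + d) c x := by
    simpa using ((hasDerivAt_id x).const_mul c).add_const d
  have := (p.hasDerivAt (c*x+d)).comp x h1
  simpa [mul_comm, Function.comp_def] using this.deriv

/-- The coupling (adjacent-element) entries of the 1D SIPDG bilinear form across the
common face `xr = xl + h` of `T = [xl, xl+h]` and `T' = [xl+h, xl+2h]`:
`A_k(ψ_T^σ, ψ_{T'}^{σ'}) = −⟨u'⟩[v] − ⟨v'⟩[u] + (α₀k²/h)[u][v]` at `xr`, with
`{w} = ½(w|_T + w|_{T'})` and `[w] = w|_T − w|_{T'}`. -/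
theorem sipdg_adjacent_element_entry (xl h α₀ : ℝ) (hh : 0 < h) (k σ σ' : ℕ) :
    let xr := xl + h
    let ψT : ℝ → ℝ := fun x => (legendre σ).eval (2*(x - xl)/h - 1)
    let ψT' : ℝ → ℝ := fun x => (legendre σ').eval (2*(x - xr)/h - 1)
    let Aval :=
      -(((1/2) * deriv ψT xr) * (-(ψT' xr)))
        - (((1/2) * deriv ψT' xr) * (ψT xr))
        + (α₀ * (k:ℝ)^2 / h) * (ψT xr * (-(ψT' xr)))
    Aval = (-1:ℝ)^(σ'+1)
        * (α₀*(k:ℝ)^2/h - (σ:ℝ)*((σ:ℝ)+1)/(2*h) - (σ':ℝ)*((σ':ℝ)+1)/(2*h)) ∧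
    |Aval| = (1/(2*h)) * |2*α₀*(k:ℝ)^2 - (σ:ℝ)*((σ:ℝ)+1) - (σ':ℝ)*((σ':ℝ)+1)| := by
  intro xr ψT ψT' Aval
  have hne : h ≠ 0 := hh.ne'
  have hψT : ψT = fun x => (legendre σ).eval ((2/h)*x + (-(2*xl)/h - 1)) := by
    funext x
    have : 2*(x - xl)/h - 1 = (2/h)*x + (-(2*xl)/h - 1) := by ring
    simp only [ψT, this]
  have hψT' : ψT' = fun x => (legendre σ').eval ((2/h)*x + (-(2*xr)/h - 1)) := by
    funext x
    have : 2*(x - xr)/h - 1 = (2/h)*x + (-(2*xr)/h - 1) := by ring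
    simp only [ψT', this]
  have e1 : ψT xr = 1 := by
    have harg : 2*(xr - xl)/h - 1 = 1 := by
      simp only [xr]; field_simp; ring
    simp only [ψT, harg, legendre_eval_one]
  have e2 : ψT' xr = (-1)^σ' := by
    have harg : 2*(xr - xr)/h - 1 = -1 := by field_simp; ring
    simp only [ψT', harg, legendre_eval_neg_one]
  have d1 : deriv ψT xr = (2/h) * ((σ:ℝ)*((σ:ℝ)+1)/2) := by
    rw [hψT, deriv_comp_affine]
    have harg : (2/h)*xr + (-(2*xl)/h - 1) = 1 := by
      simp only [xr]; field_simp; ring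
    rw [harg, legendre_deriv_one]
  have d2 : deriv ψT' xr = (2/h) * ((-1)^(σ'+1) * ((σ':ℝ)*((σ':ℝ)+1)/2)) := by
    rw [hψT', deriv_comp_affine]
    have harg : (2/h)*xr + (-(2*xr)/h - 1) = -1 := by field_simp; ring
    rw [harg, legendre_deriv_neg_one]
  have hA : Aval = (-1:ℝ)^(σ'+1)
      * (α₀*(k:ℝ)^2/h - (σ:ℝ)*((σ:ℝ)+1)/(2*h) - (σ':ℝ)*((σ':ℝ)+1)/(2*h)) := by
    show -(((1/2) * deriv ψT xr) * (-(ψT' xr)))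
        - (((1/2) * deriv ψT' xr) * (ψT xr))
        + (α₀ * (k:ℝ)^2 / h) * (ψT xr * (-(ψT' xr))) = _
    rw [e1, e2, d1, d2, pow_succ]
    field_simp
    ring
  refine ⟨hA, ?_⟩
  rw [hA, abs_mul, abs_pow, abs_neg, abs_one, one_pow, one_mul]
  rw [show α₀*(k:ℝ)^2/h - (σ:ℝ)*((σ:ℝ)+1)/(2*h) - (σ':ℝ)*((σ':ℝ)+1)/(2*h)
      = (1/(2*h)) * (2*α₀*(k:ℝ)^2 - (σ:ℝ)*((σ:ℝ)+1) - (σ':ℝ)*((σ':ℝ)+1)) from by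
    field_simp]
  rw [abs_mul, abs_of_pos (by positivity : (0:ℝ) < 1/(2*h))]
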